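/- Let β < 0, γ > 0, set x_R = 2/(γ + √(γ² − 4β)), and let Π : [0, x_R) → ℝ be a Poincaré half-map datum on [0, x_R). Let B, α, δ ∈ ℝ with B > δ > 0, α < 0 and x* = −(B−δ)/α = x_R, and assume X^sl(u) > 0 for all u ∈ [Π(x), x] and all x ∈ [0, x_R). Then Ĩ(x) = ∫_{Π(x)}^{x} u/X^sl(u) du > 0 for all x ∈ (0, x_R). -/

import Mathlib

/-!
Since `x_R` is a root of `V`, both `V` and `X^sl` vanish at `x_R`, so `V = X^sl · (K u + c)` with
`K = (1 + δ) β / α > 0`. Hence `u / X^sl = c · u / V + K · u² / V`; the first term integrates to `0`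
by the half-map condition, and the second to a positive number.
-/

/-- `V(x) = βx² − γx + 1`. -/
def Vq (β γ x : ℝ) : ℝ := β * x ^ 2 - γ * x + 1

/-- The sliding vector field `X^sl(x) = (B − δ + αx)/(1 + δ)`. -/
noncomputable def Xsl (B α δ x : ℝ) : ℝ := (B - δ + α * x) / (1 + δ)

/-- The slow divergence integral (up to a positive constant)
`Ĩ(x) = ∫_{P x}^{x} u / X^sl(u) du`. -/
noncomputable def Itil (B α δ : ℝ) (P : ℝ → ℝ) (x : ℝ) : ℝ :=
  ∫ u in (P x)..x, u / Xsl B α δ u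

open Set intervalIntegral

lemma Vq_eq_mul_of_root {β γ r : ℝ} (hr : Vq β γ r = 0) (u : ℝ) :
    Vq β γ u = (u - r) * (β * (u + r) - γ) := by
  unfold Vq at *
  linear_combination hr

lemma Vq_two_div_add_sqrt {β γ : ℝ} (hβ : β < 0) :
    Vq β γ (2 / (γ + √(γ ^ 2 - 4 * β))) = 0 := by
  set s := √(γ ^ 2 - 4 * β)
  have hs : s ^ 2 = γ ^ 2 - 4 * β := Real.sq_sqrt (by nlinarith)
  -- `s > |γ|` because `β < 0`
  have hne : γ + s ≠ 0 := by nlinarith [Real.sqrt_nonneg (γ ^ 2 - 4 * β)]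
  unfold Vq
  field_simp
  linear_combination hs

lemma continuous_Vq (β γ : ℝ) : Continuous (Vq β γ) := by
  unfold Vq
  fun_prop

lemma Xsl_eq_mul_sub {B α δ r : ℝ} (hα : α ≠ 0) (hr : -(B - δ) / α = r) (u : ℝ) :
    Xsl B α δ u = α / (1 + δ) * (u - r) := by
  rw [div_eq_iff hα] at hr
  unfold Xsl
  rw [div_mul_eq_mul_div]
  congr 1
  linear_combination -hr

lemma Vq_eq_Xsl_mul {β γ B α δ r : ℝ} (hα : α ≠ 0) (hδ : 1 + δ ≠ 0) (hVr : Vq β γ r = 0)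
    (hr : -(B - δ) / α = r) (u : ℝ) :
    Vq β γ u = Xsl B α δ u * ((1 + δ) * β / α * u + (1 + δ) * (β * r - γ) / α) := by
  rw [Vq_eq_mul_of_root hVr, Xsl_eq_mul_sub hα hr]
  field_simp
  ring

lemma integral_sq_div_pos {V : ℝ → ℝ} {a b : ℝ} (hab : a < b) (hVc : ContinuousOn V (Icc a b))
    (hV : ∀ u ∈ Icc a b, 0 < V u) : 0 < ∫ u in a..b, u ^ 2 / V u := by
  obtain ⟨c, hc, hc0⟩ : ∃ c ∈ Icc a b, c ≠ 0 := by
    rcases eq_or_ne b 0 with rfl | hb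
    · exact ⟨a, left_mem_Icc.2 hab.le, hab.ne⟩
    · exact ⟨b, right_mem_Icc.2 hab.le, hb⟩
  exact integral_pos hab ((continuousOn_id.pow 2).div hVc fun u hu ↦ (hV u hu).ne')
    (fun u hu ↦ div_nonneg (sq_nonneg u) (hV u (Ioc_subset_Icc_self hu)).le)
    ⟨c, hc, div_pos (sq_pos_of_ne_zero hc0) (hV c hc)⟩

lemma integral_div_pos_of_eq_mul_linear {V X : ℝ → ℝ} {a b c K : ℝ} (hab : a < b) (hK : 0 < K)
    (hVc : ContinuousOn V (Icc a b)) (hV : ∀ u ∈ Icc a b, 0 < V u)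
    (hfac : ∀ u ∈ Icc a b, V u = X u * (K * u + c)) (hint : ∫ u in a..b, u / V u = 0) :
    0 < ∫ u in a..b, u / X u := by
  have hVne : ∀ u ∈ uIcc a b, V u ≠ 0 := fun u hu ↦ (hV u (uIcc_of_le hab.le ▸ hu)).ne'
  have hsplit : ∀ u ∈ uIcc a b, u / X u = c * (u / V u) + K * (u ^ 2 / V u) := by
    intro u hu
    rw [uIcc_of_le hab.le] at hu
    have hlin : K * u + c ≠ 0 := right_ne_zero_of_mul (hfac u hu ▸ (hV u hu).ne')
    calc u / X u = u * (K * u + c) / V u := by rw [hfac u hu, mul_div_mul_right _ _ hlin]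
      _ = c * (u / V u) + K * (u ^ 2 / V u) := by ring
  have hVc' : ContinuousOn V (uIcc a b) := uIcc_of_le hab.le ▸ hVc
  have hint₁ : IntervalIntegrable (fun u ↦ u / V u) MeasureTheory.volume a b :=
    (continuousOn_id.div hVc' hVne).intervalIntegrable
  have hint₂ : IntervalIntegrable (fun u ↦ u ^ 2 / V u) MeasureTheory.volume a b :=
    ((continuousOn_id.pow 2).div hVc' hVne).intervalIntegrable
  rw [integral_congr hsplit, integral_add (hint₁.const_mul c) (hint₂.const_mul K),
    integral_const_mul, integral_const_mul, hint, mul_zero, zero_add]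
  exact mul_pos hK (integral_sq_div_pos hab hVc hV)

theorem slow_divergence_integral_positive_saddle_general (β γ B α δ xR : ℝ)
    (hβ : β < 0)
    (hxR : xR = 2 / (γ + Real.sqrt (γ ^ 2 - 4 * β)))
    (P : ℝ → ℝ)
    (hPneg : ∀ x ∈ Set.Ioo 0 xR, P x < 0)
    (hV : ∀ x ∈ Set.Ioo 0 xR, ∀ u ∈ Set.Icc (P x) x, Vq β γ u > 0)
    (hint : ∀ x ∈ Set.Ioo 0 xR, ∫ u in (P x)..x, u / Vq β γ u = 0)
    (hδ : δ > 0) (hα : α < 0)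
    (hxstar : -(B - δ) / α = xR) :
    ∀ x ∈ Set.Ioo 0 xR, Itil B α δ P x > 0 := by
  intro x hx
  have hroot : Vq β γ xR = 0 := hxR ▸ Vq_two_div_add_sqrt hβ
  have hK : 0 < (1 + δ) * β / α := div_pos_of_neg_of_neg (by nlinarith) hα
  exact integral_div_pos_of_eq_mul_linear ((hPneg x hx).trans hx.1) hK
    (continuous_Vq β γ).continuousOn (hV x hx)
    (fun u _ ↦ Vq_eq_Xsl_mul hα.ne (by linarith) hroot hxstar u) (hint x hx)

/-- Theorem 3.3, Statement 4 (saddle case, `x* = x_R`): for `β < 0`, `γ > 0`,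
`x_R = 2/(γ + √(γ² − 4β))`, a Poincaré half-map datum on `[0, x_R)`, `B > δ > 0`,
`α < 0` and `x* = −(B−δ)/α = x_R`, the slow divergence integral is positive on
`(0, x_R)`. -/
theorem slow_divergence_integral_positive_saddle (β γ B α δ xR : ℝ)
    (hβ : β < 0) (hγ : 0 < γ)
    (hxR : xR = 2 / (γ + Real.sqrt (γ ^ 2 - 4 * β)))
    (P : ℝ → ℝ)
    (hdiff : DifferentiableOn ℝ P (Set.Ico 0 xR))
    (hP0 : P 0 = 0)
    (hPneg : ∀ x ∈ Set.Ioo 0 xR, P x < 0)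
    (hV : ∀ x ∈ Set.Ioo 0 xR, ∀ u ∈ Set.Icc (P x) x, Vq β γ u > 0)
    (hint : ∀ x ∈ Set.Ioo 0 xR, ∫ u in (P x)..x, u / Vq β γ u = 0)
    (hBδ : B > δ) (hδ : δ > 0) (hα : α < 0)
    (hxstar : -(B - δ) / α = xR)
    (hXsl : ∀ x ∈ Set.Ico 0 xR, ∀ u ∈ Set.Icc (P x) x, Xsl B α δ u > 0) :
    ∀ x ∈ Set.Ioo 0 xR, Itil B α δ P x > 0 :=
  slow_divergence_integral_positive_saddle_general β γ B α δ xR hβ hxR P hPneg hV hint hδ hα hxstar
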